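/- Let ≤_T be either the lexicographic order with X₁ > X₂ or the graded order with X₂ > X₁. Let 2 ≤ t ≤ 4 with t ≤ ⌊r₁/2⌋ and t ≤ ⌊r₂/2⌋, let e ∈ 𝔽(r₁,r₂) with ω(e) ≤ t, let τ ∈ 𝓘, and let U be the syndrome table afforded by τ and e. Let l = (1,3) ∈ 𝔉. Let F = {f^(1), f^(2)} be a minimal set of polynomials for u^l with defining points s^(1) = (2,0) and s^(2) = (0,2), and let (g, k₁) be an auxiliary polynomial for index 1 with v₁ = g[U]_{k₁} ≠ 0. Then there exists b ∈ L such that the polynomial h_b = f^(2) − (b/v₁)·g generates u^l and satisfies h_b[U]_k = 0 for every k ∈ B(2t+1) with l ≤_T k. -/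

import Mathlib

/-- A monomial order on ℕ × ℕ: a linear order compatible with addition
for which (0,0) is the least element. -/
structure MonOrd where
  le : ℕ × ℕ → ℕ × ℕ → Prop
  refl : ∀ a, le a a
  trans : ∀ a b c, le a b → le b c → le a c
  antisymm : ∀ a b, le a b → le b a → a = b
  total : ∀ a b, le a b ∨ le b a
  add_right : ∀ a b c, le a b → le (a + c) (b + c)
  zero_le : ∀ a, le (0, 0) a

/-- Strict version of a monomial order. -/
def MonOrd.lt (T : MonOrd) (a b : ℕ × ℕ) : Prop := T.le a b ∧ a ≠ b

/-- `s` is the leading power product exponent of `f` w.r.t. `T`. -/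
def IsLP {L : Type} [Field L] (T : MonOrd) (f : (ℕ × ℕ) →₀ L) (s : ℕ × ℕ) : Prop :=
  s ∈ f.support ∧ ∀ m ∈ f.support, T.le m s

/-- `f[U]_n`, computed with respect to a given leading exponent `s` of `f`. -/
noncomputable def fApp {L : Type} [Field L] (U : ℕ × ℕ → L) (f : (ℕ × ℕ) →₀ L)
    (s n : ℕ × ℕ) : L :=
  if s.1 ≤ n.1 ∧ s.2 ≤ n.2 then
    ∑ m ∈ f.support, f m * U (m.1 + n.1 - s.1, m.2 + n.2 - s.2)
  else 0

/-- `f` generates the doubly periodic array `U`. -/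
def GeneratesU {L : Type} [Field L] (T : MonOrd) (U : ℕ × ℕ → L) (f : (ℕ × ℕ) →₀ L) : Prop :=
  ∃ s, IsLP T f s ∧ ∀ n, fApp U f s n = 0

/-- `f` generates the finite subarray `u^l` of `U`. -/
def GeneratesUpTo {L : Type} [Field L] (T : MonOrd) (U : ℕ × ℕ → L) (l : ℕ × ℕ)
    (f : (ℕ × ℕ) →₀ L) : Prop :=
  ∃ s, IsLP T f s ∧ ∀ k, s.1 ≤ k.1 → s.2 ≤ k.2 → T.lt k l → fApp U f s k = 0

/-- `U` is a doubly periodic array of period r₁ × r₂. -/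
def DoublyPeriodic {L : Type} (r₁ r₂ : ℕ) (U : ℕ × ℕ → L) : Prop :=
  ∀ n m : ℕ × ℕ, n.1 % r₁ = m.1 % r₁ → n.2 % r₂ = m.2 % r₂ → U n = U m

/-- Evaluation of a bivariate polynomial at a point `(x, y)`. -/
noncomputable def polyEval {L : Type} [Field L] (f : (ℕ × ℕ) →₀ L) (x y : L) : L :=
  ∑ m ∈ f.support, f m * x ^ m.1 * y ^ m.2

/-- The syndrome table afforded by `τ` and `e`:  `u_n = e(α^(τ+n))`. -/
noncomputable def synTable {F L : Type} [Field F] [Field L] [Algebra F L] {r₁ r₂ : ℕ}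
    (α₁ α₂ : L) (τ : Fin r₁ × Fin r₂) (e : Fin r₁ × Fin r₂ → F) : ℕ × ℕ → L :=
  fun n => ∑ p : Fin r₁ × Fin r₂,
    algebraMap F L (e p) * (α₁ ^ ((τ.1 : ℕ) + n.1)) ^ (p.1 : ℕ)
      * (α₂ ^ ((τ.2 : ℕ) + n.2)) ^ (p.2 : ℕ)

/-- The weight ω(e): number of nonzero coefficients. -/
noncomputable def wt {F : Type} [Field F] {r₁ r₂ : ℕ} (e : Fin r₁ × Fin r₂ → F) : ℕ :=
  {p | e p ≠ 0}.ncard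

/-- The hyperbolic set B(δ) of amplitude δ inside {0,…,r₁−1} × {0,…,r₂−1}. -/
def hypB (r₁ r₂ δ : ℕ) : Set (ℕ × ℕ) :=
  {l | l.1 < r₁ ∧ l.2 < r₂ ∧ (l.1 + 1) * (l.2 + 1) ≤ δ ∧ l ≠ (δ - 1, 0) ∧ l ≠ (0, δ - 1)}

/-- The border set 𝔉 = {l ∈ B(2t+1) : 2t ≤ (l₁+1)(l₂+1)}. -/
def frontF (r₁ r₂ t : ℕ) : Set (ℕ × ℕ) :=
  {l ∈ hypB r₁ r₂ (2 * t + 1) | 2 * t ≤ (l.1 + 1) * (l.2 + 1)}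

/-- The lexicographic order with X₁ > X₂. -/
def lexMonOrd : MonOrd where
  le a b := a.1 < b.1 ∨ (a.1 = b.1 ∧ a.2 ≤ b.2)
  refl a := by omega
  trans a b c h1 h2 := by omega
  antisymm a b h1 h2 := by
    obtain ⟨a1, a2⟩ := a; obtain ⟨b1, b2⟩ := b
    simp_all only [Prod.mk.injEq]; omega
  total a b := by omega
  add_right a b c h := by
    obtain ⟨a1, a2⟩ := a; obtain ⟨b1, b2⟩ := b; obtain ⟨c1, c2⟩ := c
    simp_all only [Prod.mk_add_mk]; omega
  zero_le a := by
    obtain ⟨a1, a2⟩ := a; simp only []; omega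

/-- The (reverse) graded order with X₂ > X₁. -/
def grMonOrd : MonOrd where
  le a b := a.1 + a.2 < b.1 + b.2 ∨ (a.1 + a.2 = b.1 + b.2 ∧ a.2 ≤ b.2)
  refl a := by omega
  trans a b c h1 h2 := by omega
  antisymm a b h1 h2 := by
    obtain ⟨a1, a2⟩ := a; obtain ⟨b1, b2⟩ := b
    simp_all only [Prod.mk.injEq]; omega
  total a b := by omega
  add_right a b c h := by
    obtain ⟨a1, a2⟩ := a; obtain ⟨b1, b2⟩ := b; obtain ⟨c1, c2⟩ := c
    simp_all only [Prod.mk_add_mk]; omega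
  zero_le a := by
    obtain ⟨a1, a2⟩ := a; simp only []; omega

/-- The ideal (X₁^{r₁} − 1, X₂^{r₂} − 1) of L[X₁,X₂]. -/
noncomputable def periodIdeal (L : Type) [Field L] (r₁ r₂ : ℕ) :
    Ideal (AddMonoidAlgebra L (ℕ × ℕ)) :=
  Ideal.span {AddMonoidAlgebra.single (r₁, 0) 1 - 1, AddMonoidAlgebra.single (0, r₂) 1 - 1}

/-!
Write the syndrome table as an exponential sum `u_n = ∑ᵢ cᵢ xᵢ^n₁ yᵢ^n₂`, so that
`f[U]_(s+m) = ∑ᵢ cᵢ f(xᵢ, yᵢ) xᵢ^m₁ yᵢ^m₂`. Take `b = f⁽²⁾[U]_(1,3)`. Then `h = f⁽²⁾ - (b/v₁) g` has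
leading exponent `(0,2)` and `h[U]_((0,2)+m) = f⁽²⁾[U]_((0,2)+m) - (b/v₁) g[U]_(s_g+m)`, which
vanishes for every `m ⪯ (1,1)`: for `m ≠ (1,1)` both terms vanish because `f⁽²⁾` and `(g, k₁)`
generate the earlier entries, and for `m = (1,1)` the choice of `b` cancels them.

Minimality of `F` means that no nonzero polynomial supported on `{0,1}²` vanishes at all the points
`(xᵢ, yᵢ)` with `cᵢ ≠ 0`. There are at most `ω(e) ≤ 4` such points, so the four monomials span all
functions on them, and the four vanishing moments of `h` force `cᵢ h(xᵢ, yᵢ) = 0` for every `i`: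
`h[U]` vanishes everywhere.
-/

namespace MonOrd

variable (T : MonOrd) {a b c : ℕ × ℕ}

lemma le_of_le (h : a ≤ b) : T.le a b := by
  obtain ⟨c, rfl⟩ := exists_add_of_le h
  simpa [add_comm] using T.add_right 0 c a (T.zero_le c)

lemma lt_of_lt (h : a < b) : T.lt a b := ⟨T.le_of_le h.le, h.ne⟩

lemma lt_of_add_lt_add_right (h : T.lt (a + c) (b + c)) : T.lt a b := by
  refine ⟨(T.total a b).resolve_right fun hba => h.2 (T.antisymm _ _ h.1 (T.add_right _ _ c hba)), ?_⟩
  rintro rfl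
  exact h.2 rfl

lemma exists_max (S : Finset (ℕ × ℕ)) (hS : S.Nonempty) : ∃ s ∈ S, ∀ m ∈ S, T.le m s := by
  induction hS using Finset.Nonempty.cons_induction with
  | singleton a => exact ⟨a, by simp, by simp [T.refl]⟩
  | cons a S ha hS ih =>
    obtain ⟨s, hs, hmax⟩ := ih
    rcases T.total a s with h | h
    · exact ⟨s, by simp [hs], by simpa [h] using hmax⟩
    · exact ⟨a, by simp, by simpa [T.refl] using fun m hm => T.trans _ _ _ (hmax m hm) h⟩

lemma exists_isLP {L : Type} [Field L] {f : (ℕ × ℕ) →₀ L} (hf : f ≠ 0) : ∃ s, IsLP T f s :=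
  T.exists_max f.support (Finsupp.support_nonempty_iff.2 hf)

end MonOrd

variable {L : Type} [Field L]

lemma IsLP.sub_smul {T : MonOrd} {f g : (ℕ × ℕ) →₀ L} {s s' : ℕ × ℕ} (hf : IsLP T f s)
    (hg : IsLP T g s') (hlt : T.lt s' s) (a : L) : IsLP T (f - a • g) s := by
  have hgs : g s = 0 := by
    by_contra hne
    exact hlt.2 (T.antisymm _ _ hlt.1 (hg.2 s (Finsupp.mem_support_iff.2 hne)))
  refine ⟨by simpa [hgs] using hf.1, fun m hm => ?_⟩
  by_cases hfm : f m = 0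
  · have hgm : g m ≠ 0 := by
      rintro hgm
      simp [hfm, hgm] at hm
    exact T.trans _ _ _ (hg.2 m (Finsupp.mem_support_iff.2 hgm)) hlt.1
  · exact hf.2 m (Finsupp.mem_support_iff.2 hfm)

section fApp

variable (U : ℕ × ℕ → L) (f g : (ℕ × ℕ) →₀ L)

lemma le_of_fApp_ne_zero {s n : ℕ × ℕ} (h : fApp U f s n ≠ 0) : s ≤ n := by
  by_contra hsn
  exact h (if_neg (by simpa [Prod.le_def] using hsn))

lemma fApp_add (s m : ℕ × ℕ) : fApp U f s (s + m) = f.sum fun m' a => a * U (m' + m) := by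
  rw [fApp, if_pos (by simp)]
  refine Finset.sum_congr rfl fun m' _ => ?_
  congr 3 <;> simp <;> omega

lemma fApp_sub_smul (s s' m : ℕ × ℕ) (a : L) :
    fApp U (f - a • g) s (s + m) = fApp U f s (s + m) - a * fApp U g s' (s' + m) := by
  simp only [fApp_add]
  rw [Finsupp.sum_sub_index (fun _ _ _ => sub_mul ..), Finsupp.sum_smul_index (fun _ => zero_mul _),
    Finsupp.mul_sum]
  simp only [mul_assoc]

end fApp

lemma eq_zero_of_forall_sum_mul_eq_zero {ι J : Type*} [Fintype ι] [Fintype J] {φ : J → ι → L}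
    (hφ : LinearIndependent L φ) (hcard : Fintype.card ι ≤ Fintype.card J) {d : ι → L}
    (hd : ∀ j, ∑ i, φ j i * d i = 0) : d = 0 := by
  classical
  have hspan : Submodule.span L (Set.range φ) = ⊤ := by
    refine hφ.span_eq_top_of_card_eq_finrank' (le_antisymm ?_ ?_)
    · simpa using hφ.fintype_card_le_finrank
    · simpa using hcard
  have hzero : Fintype.linearCombination L d = 0 :=
    LinearMap.ext_on_range hspan fun j => by simpa [Fintype.linearCombination_apply] using hd j
  funext i
  simpa using LinearMap.congr_fun hzero (Pi.single i 1)

section expSum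

variable {ι : Type*} (c x y : ι → L) {M : Finset (ℕ × ℕ)}

lemma linearIndepOn_monomials
    (hM : ∀ a : (ℕ × ℕ) →₀ L, a.support ⊆ M → (∀ i, c i * polyEval a (x i) (y i) = 0) → a = 0) :
    LinearIndepOn L (fun m (i : {i // c i ≠ 0}) => x i ^ m.1 * y i ^ m.2) (M : Set (ℕ × ℕ)) := by
  rw [linearIndepOn_iff]
  refine fun a ha hzero => hM a (by simpa [Finsupp.mem_supported] using ha) fun i => ?_
  by_cases hi : c i = 0
  · simp [hi]
  · have := congr_fun hzero ⟨i, hi⟩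
    simp only [Finsupp.linearCombination_apply, Finsupp.sum, Finset.sum_apply, Pi.smul_apply,
      smul_eq_mul, Pi.zero_apply] at this
    simp only [polyEval, mul_assoc, this, mul_zero]

variable [Fintype ι]

def expSum (n : ℕ × ℕ) : L := ∑ i, c i * x i ^ n.1 * y i ^ n.2

variable (f : (ℕ × ℕ) →₀ L)

lemma fApp_expSum_add (s m : ℕ × ℕ) :
    fApp (expSum c x y) f s (s + m) = expSum (fun i => c i * polyEval f (x i) (y i)) x y m := by
  simp only [fApp_add, expSum, polyEval, Finsupp.sum, Finset.mul_sum, Finset.sum_mul]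
  rw [Finset.sum_comm]
  refine Finset.sum_congr rfl fun i _ => Finset.sum_congr rfl fun m' _ => ?_
  simp only [Prod.fst_add, Prod.snd_add, pow_add]
  ring

lemma fApp_expSum_eq_zero (h : ∀ i, c i * polyEval f (x i) (y i) = 0) (s n : ℕ × ℕ) :
    fApp (expSum c x y) f s n = 0 := by
  by_contra hne
  obtain ⟨m, rfl⟩ := exists_add_of_le (le_of_fApp_ne_zero _ _ hne)
  simp [fApp_expSum_add, expSum, h] at hne

lemma eq_zero_of_expSum_eq_zero
    (hM : ∀ a : (ℕ × ℕ) →₀ L, a.support ⊆ M → (∀ i, c i * polyEval a (x i) (y i) = 0) → a = 0)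
    (hcard : Nat.card {i // c i ≠ 0} ≤ M.card) {d : ι → L} (hdc : ∀ i, c i = 0 → d i = 0)
    (hd : ∀ m ∈ M, expSum d x y m = 0) : d = 0 := by
  classical
  have hE : (fun i : {i // c i ≠ 0} => d i) = 0 := by
    refine eq_zero_of_forall_sum_mul_eq_zero (linearIndepOn_monomials c x y hM)
      (by simpa [Nat.card_eq_fintype_card] using hcard) fun m => ?_
    calc ∑ i : {i // c i ≠ 0}, x i ^ m.1.1 * y i ^ m.1.2 * d i
        = ∑ i ∈ Finset.univ.filter (c · ≠ 0), d i * x i ^ m.1.1 * y i ^ m.1.2 := by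
          rw [Finset.sum_subtype _ (p := (c · ≠ 0)) (by simp)]
          exact Finset.sum_congr rfl fun i _ => by ring
      _ = expSum d x y m := Finset.sum_filter_of_ne fun i _ h hc => h (by simp [hdc i hc])
      _ = 0 := hd m m.2
  funext i
  by_cases hi : c i = 0
  · exact hdc i hi
  · exact congr_fun hE ⟨i, hi⟩

lemma fApp_expSum_eq_zero_of_forall_add
    (hM : ∀ a : (ℕ × ℕ) →₀ L, a.support ⊆ M → (∀ i, c i * polyEval a (x i) (y i) = 0) → a = 0)
    (hcard : Nat.card {i // c i ≠ 0} ≤ M.card) {s : ℕ × ℕ}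
    (hf : ∀ m ∈ M, fApp (expSum c x y) f s (s + m) = 0) (n : ℕ × ℕ) :
    fApp (expSum c x y) f s n = 0 := by
  refine fApp_expSum_eq_zero c x y f (fun i => ?_) s n
  refine congr_fun (eq_zero_of_expSum_eq_zero c x y hM hcard
    (d := fun i => c i * polyEval f (x i) (y i)) (fun i hi => ?_) fun m hm => ?_) i
  · simp [hi]
  · rw [← fApp_expSum_add]
    exact hf m hm

lemma eq_zero_of_support_subset_of_forall_exists_fApp_ne_zero (T : MonOrd)
    (hmin : ∀ a s, IsLP T a s → s ∈ M → ∃ k, fApp (expSum c x y) a s k ≠ 0)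
    (a : (ℕ × ℕ) →₀ L) (haM : a.support ⊆ M) (ha : ∀ i, c i * polyEval a (x i) (y i) = 0) :
    a = 0 := by
  by_contra hne
  obtain ⟨s, hs⟩ := T.exists_isLP hne
  obtain ⟨k, hk⟩ := hmin a s hs (haM hs.1)
  exact hk (fApp_expSum_eq_zero c x y a ha s k)

end expSum

section synTable

variable {F : Type} [Field F] [Algebra F L] {r₁ r₂ : ℕ} (α₁ α₂ : L) (τ : Fin r₁ × Fin r₂)
  (e : Fin r₁ × Fin r₂ → F)

noncomputable def synCoeff (p : Fin r₁ × Fin r₂) : L :=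
  algebraMap F L (e p) * (α₁ ^ (p.1 : ℕ)) ^ (τ.1 : ℕ) * (α₂ ^ (p.2 : ℕ)) ^ (τ.2 : ℕ)

lemma synTable_eq_expSum :
    synTable α₁ α₂ τ e =
      expSum (synCoeff α₁ α₂ τ e) (fun p => α₁ ^ (p.1 : ℕ)) (fun p => α₂ ^ (p.2 : ℕ)) := by
  funext n
  refine Finset.sum_congr rfl fun p _ => ?_
  simp only [synCoeff, ← pow_mul, pow_add]
  ring

lemma card_synCoeff_ne_zero_le_wt : Nat.card {p // synCoeff α₁ α₂ τ e p ≠ 0} ≤ wt e :=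
  (Nat.card_coe_set_eq {p | synCoeff α₁ α₂ τ e p ≠ 0}).trans_le <|
    Set.ncard_le_ncard (fun p hp he => hp (by simp [synCoeff, he])) (Set.toFinite _)

end synTable

theorem exceptional_case_one_three_general
    (F : Type) [Field F]
    (L : Type) [Field L] [Algebra F L]
    (r₁ r₂ : ℕ)
    (α₁ α₂ : L)
    (T : MonOrd)
    (t : ℕ) (ht4 : t ≤ 4)
    (e : Fin r₁ × Fin r₂ → F) (hω : wt e ≤ t) (τ : Fin r₁ × Fin r₂)
    (U : ℕ × ℕ → L) (hU : U = synTable α₁ α₂ τ e)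
    (l : ℕ × ℕ) (hleq : l = (1, 3))
    (f₂ : (ℕ × ℕ) →₀ L) (s₁ s₂ : ℕ × ℕ)
    (hLP2 : IsLP T f₂ s₂)
    (hs1 : s₁ = (2, 0)) (hs2 : s₂ = (0, 2))
    (hgen2 : ∀ k : ℕ × ℕ, s₂.1 ≤ k.1 → s₂.2 ≤ k.2 → T.lt k l → fApp U f₂ s₂ k = 0)
    (hmin : ∀ (g : (ℕ × ℕ) →₀ L) (sg : ℕ × ℕ), IsLP T g sg →
      sg.1 ≤ s₁.1 - 1 → sg.2 ≤ s₂.2 - 1 →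
      ∃ k : ℕ × ℕ, sg.1 ≤ k.1 ∧ sg.2 ≤ k.2 ∧ T.lt k l ∧ fApp U g sg k ≠ 0)
    (g : (ℕ × ℕ) →₀ L) (sg k₁ : ℕ × ℕ) (hgLP : IsLP T g sg)
    (hk₁l : T.lt k₁ l)
    (hgpast : ∀ m : ℕ × ℕ, sg.1 ≤ m.1 → sg.2 ≤ m.2 → T.lt m k₁ → fApp U g sg m = 0)
    (hk₁LP : (k₁.1 - sg.1, k₁.2 - sg.2) = (s₁.1 - 1, s₂.2 - 1))
    (v₁ : L) (hv₁ : fApp U g sg k₁ = v₁) (hv₁0 : v₁ ≠ 0) :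
    ∃ b : L, ∃ sh : ℕ × ℕ,
      IsLP T (f₂ - (b / v₁) • g) sh ∧
      (∀ k : ℕ × ℕ, sh.1 ≤ k.1 → sh.2 ≤ k.2 → T.lt k l →
        fApp U (f₂ - (b / v₁) • g) sh k = 0) ∧
      (∀ k ∈ hypB r₁ r₂ (2 * t + 1), T.le l k →
        fApp U (f₂ - (b / v₁) • g) sh k = 0) := by
  subst hU hleq hs1 hs2
  rw [synTable_eq_expSum] at hgen2 hmin hgpast hv₁ ⊢
  obtain rfl : k₁ = sg + (1, 1) := by
    have hle := le_of_fApp_ne_zero _ _ (hv₁ ▸ hv₁0)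
    simp only [Prod.mk.injEq, Prod.le_def] at hk₁LP hle
    ext <;> simp <;> omega
  have hsg : T.lt sg (0, 2) := T.lt_of_add_lt_add_right (c := (1, 1)) hk₁l
  set U := expSum (synCoeff α₁ α₂ τ e) (fun p => α₁ ^ (p.1 : ℕ)) (fun p => α₂ ^ (p.2 : ℕ))
  set b := fApp U f₂ (0, 2) (1, 3)
  refine ⟨b, (0, 2), hLP2.sub_smul hgLP hsg _, ?_⟩
  suffices h : ∀ n, fApp U (f₂ - (b / v₁) • g) (0, 2) n = 0 from
    ⟨fun k _ _ _ => h k, fun k _ _ => h k⟩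
  refine fApp_expSum_eq_zero_of_forall_add _ _ _ _ (M := Finset.Iic (1, 1)) ?_ ?_ fun m hm => ?_
  · refine eq_zero_of_support_subset_of_forall_exists_fApp_ne_zero _ _ _ T fun a s hs hsM => ?_
    obtain ⟨hs₁, hs₂⟩ := Prod.le_def.1 (Finset.mem_Iic.1 hsM)
    obtain ⟨k, -, -, -, hk⟩ := hmin a s hs hs₁ hs₂
    exact ⟨k, hk⟩
  · exact (card_synCoeff_ne_zero_le_wt α₁ α₂ τ e).trans (hω.trans ht4)
  rw [fApp_sub_smul _ _ _ _ sg]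
  rcases eq_or_ne m (1, 1) with rfl | hne
  · rw [hv₁, div_mul_cancel₀ _ hv₁0]
    exact sub_self b
  · have hlt : m < (1, 1) := lt_of_le_of_ne (Finset.mem_Iic.1 hm) hne
    rw [hgen2 _ (by simp) (by simp) (T.lt_of_lt (by simpa using add_lt_add_right hlt (0, 2))),
      hgpast _ (by simp) (by simp) (T.lt_of_lt (add_lt_add_right hlt sg)), mul_zero, sub_zero]

/-- either order; exceptional case d = 2, s⁽¹⁾ = (2,0), s⁽²⁾ = (0,2),
l = (1,3): existence of b ∈ L such that h_b = f⁽²⁾ − (b/v₁)·g generates u^l and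
kills all later points of B(2t+1). -/
theorem exceptional_case_one_three
    (q : ℕ) (hq : IsPrimePow q)
    (F : Type) [Field F] [Fintype F] (hF : Fintype.card F = q)
    (L : Type) [Field L] [Algebra F L]
    (r₁ r₂ : ℕ) (hr₁ : 0 < r₁) (hr₂ : 0 < r₂) (hco : Nat.Coprime q (r₁ * r₂))
    (α₁ α₂ : L) (hα₁ : IsPrimitiveRoot α₁ r₁) (hα₂ : IsPrimitiveRoot α₂ r₂)
    (T : MonOrd) (hT : T = lexMonOrd ∨ T = grMonOrd)
    (t : ℕ) (ht2 : 2 ≤ t) (ht4 : t ≤ 4) (htr1 : t ≤ r₁ / 2) (htr2 : t ≤ r₂ / 2)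
    (e : Fin r₁ × Fin r₂ → F) (hω : wt e ≤ t) (τ : Fin r₁ × Fin r₂)
    (U : ℕ × ℕ → L) (hU : U = synTable α₁ α₂ τ e)
    (l : ℕ × ℕ) (hl : l ∈ frontF r₁ r₂ t) (hleq : l = (1, 3))
    (f₁ f₂ : (ℕ × ℕ) →₀ L) (s₁ s₂ : ℕ × ℕ)
    (hLP1 : IsLP T f₁ s₁) (hLP2 : IsLP T f₂ s₂)
    (hstair1 : s₂.1 = 0) (hstair2 : s₁.2 = 0)
    (hstair3 : s₂.1 < s₁.1) (hstair4 : s₁.2 < s₂.2)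
    (hs1 : s₁ = (2, 0)) (hs2 : s₂ = (0, 2))
    (hgen1 : ∀ k : ℕ × ℕ, s₁.1 ≤ k.1 → s₁.2 ≤ k.2 → T.lt k l → fApp U f₁ s₁ k = 0)
    (hgen2 : ∀ k : ℕ × ℕ, s₂.1 ≤ k.1 → s₂.2 ≤ k.2 → T.lt k l → fApp U f₂ s₂ k = 0)
    (hmin : ∀ (g : (ℕ × ℕ) →₀ L) (sg : ℕ × ℕ), IsLP T g sg →
      sg.1 ≤ s₁.1 - 1 → sg.2 ≤ s₂.2 - 1 →
      ∃ k : ℕ × ℕ, sg.1 ≤ k.1 ∧ sg.2 ≤ k.2 ∧ T.lt k l ∧ fApp U g sg k ≠ 0)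
    (g : (ℕ × ℕ) →₀ L) (sg k₁ : ℕ × ℕ) (hgLP : IsLP T g sg)
    (hk₁l : T.lt k₁ l)
    (hgpast : ∀ m : ℕ × ℕ, sg.1 ≤ m.1 → sg.2 ≤ m.2 → T.lt m k₁ → fApp U g sg m = 0)
    (hk₁LP : (k₁.1 - sg.1, k₁.2 - sg.2) = (s₁.1 - 1, s₂.2 - 1))
    (v₁ : L) (hv₁ : fApp U g sg k₁ = v₁) (hv₁0 : v₁ ≠ 0) :
    ∃ b : L, ∃ sh : ℕ × ℕ,
      IsLP T (f₂ - (b / v₁) • g) sh ∧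
      (∀ k : ℕ × ℕ, sh.1 ≤ k.1 → sh.2 ≤ k.2 → T.lt k l →
        fApp U (f₂ - (b / v₁) • g) sh k = 0) ∧
      (∀ k ∈ hypB r₁ r₂ (2 * t + 1), T.le l k →
        fApp U (f₂ - (b / v₁) • g) sh k = 0) :=
  exceptional_case_one_three_general F L r₁ r₂ α₁ α₂ T t ht4 e hω τ U hU l hleq f₂ s₁ s₂ hLP2 hs1
    hs2 hgen2 hmin g sg k₁ hgLP hk₁l hgpast hk₁LP v₁ hv₁ hv₁0
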